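/- Let μ ∈ (0,1), κ ∈ (0, 1−μ), λ ∈ (0,1], and let K : [0,1]×[0,1] → ℝ be continuous and κ-Hölder in its first variable. Then there exists a constant C > 0 such that for every continuous v : [0,1] → ℝ and all θ₁, θ₂ ∈ [0,1] with θ₁ ≠ θ₂, |(𝒦₁v)(θ₁^{1/λ}) − (𝒦₁v)(θ₂^{1/λ})| ≤ C |θ₁ − θ₂|^κ · max_{θ∈[0,1]} |v(θ)|. -/

import Mathlib

/-!
Write `𝒦₁v(t₁) - 𝒦₁v(t₂)` for `t₂ ≤ t₁` as an integral over `[0, t₂]` of the increment of the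
integrand plus a tail over `[t₂, t₁]`. On `[0, t₂]` the increment of `K` costs
`Lip (t₁ - t₂)^κ ∫ (t₁ - s)^{-μ}`, while the increment of the singular factor has a fixed sign
(`(t - s)^{-μ}` decreases in `t`), so its integral telescopes to at most `(t₁ - t₂)^{1-μ}/(1-μ)`;
the tail is of the same size. As `κ ≤ 1 - μ`, all terms are `O((t₁ - t₂)^κ)`, and `θ ↦ θ^{1/λ}`
is `1/λ`-Lipschitz on `[0, 1]` because `1/λ ≥ 1`.
-/

open MeasureTheory Set

/-- The weakly singular Volterra integral operator
`(𝒦₁v)(t) = ∫₀^t (t-s)^{-μ} K(t,s) v(s) ds`. -/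
noncomputable def K1op (μ : ℝ) (K : ℝ → ℝ → ℝ) (v : ℝ → ℝ) (t : ℝ) : ℝ :=
  ∫ s in (0:ℝ)..t, (t - s) ^ (-μ) * K t s * v s

section SingularKernel

variable {μ : ℝ}

lemma intervalIntegrable_sub_rpow_neg (hμ : μ < 1) (t a b : ℝ) :
    IntervalIntegrable (fun s => (t - s) ^ (-μ)) volume a b := by
  simpa using (intervalIntegral.intervalIntegrable_rpow' (a := t - a) (b := t - b)
    (r := -μ) (by linarith)).comp_sub_left t

lemma integral_sub_rpow_neg (hμ : μ < 1) (t a b : ℝ) :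
    ∫ s in a..b, (t - s) ^ (-μ) = ((t - a) ^ (1 - μ) - (t - b) ^ (1 - μ)) / (1 - μ) := by
  rw [intervalIntegral.integral_comp_sub_left (fun x => x ^ (-μ)) t,
    integral_rpow (Or.inl (by linarith)), neg_add_eq_sub]

lemma abs_integral_sub_rpow_neg_mul_le (hμ : μ < 1) {a t B : ℝ} (hat : a ≤ t) {g : ℝ → ℝ}
    (hgB : ∀ s ∈ Icc a t, |g s| ≤ B) :
    |∫ s in a..t, (t - s) ^ (-μ) * g s| ≤ B * (t - a) ^ (1 - μ) / (1 - μ) := by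
  calc |∫ s in a..t, (t - s) ^ (-μ) * g s|
      ≤ ∫ s in a..t, B * (t - s) ^ (-μ) := by
        refine (Real.norm_eq_abs _).symm.trans_le <| intervalIntegral.norm_integral_le_of_norm_le
          hat (ae_of_all _ fun s hs => ?_) ((intervalIntegrable_sub_rpow_neg hμ t a t).const_mul B)
        rw [Real.norm_eq_abs, abs_mul, abs_of_nonneg (Real.rpow_nonneg (by linarith [hs.2]) _),
          mul_comm]
        exact mul_le_mul_of_nonneg_right (hgB s (Ioc_subset_Icc_self hs))
          (Real.rpow_nonneg (by linarith [hs.2]) _)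
    _ = B * (t - a) ^ (1 - μ) / (1 - μ) := by
        rw [intervalIntegral.integral_const_mul, integral_sub_rpow_neg hμ, sub_self,
          Real.zero_rpow (by linarith), sub_zero, mul_div_assoc]

lemma abs_rpow_neg_mul_sub_rpow_neg_mul_le (hμ : 0 ≤ μ) {x y a b δ B : ℝ} (hy : 0 < y)
    (hyx : y ≤ x) (hδ : |a - b| ≤ δ) (hB : |b| ≤ B) :
    |x ^ (-μ) * a - y ^ (-μ) * b| ≤ δ * x ^ (-μ) + B * (y ^ (-μ) - x ^ (-μ)) := by
  have hx : 0 ≤ x ^ (-μ) := Real.rpow_nonneg (hy.le.trans hyx) _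
  have hxy : x ^ (-μ) ≤ y ^ (-μ) := Real.rpow_le_rpow_of_nonpos hy hyx (neg_nonpos.2 hμ)
  calc |x ^ (-μ) * a - y ^ (-μ) * b|
      = |x ^ (-μ) * (a - b) + (x ^ (-μ) - y ^ (-μ)) * b| := by ring_nf
    _ ≤ x ^ (-μ) * |a - b| + (y ^ (-μ) - x ^ (-μ)) * |b| := by
        refine (abs_add_le _ _).trans_eq ?_
        rw [abs_mul, abs_mul, abs_of_nonneg hx, abs_sub_comm (x ^ (-μ)),
          abs_of_nonneg (sub_nonneg.2 hxy)]
    _ ≤ δ * x ^ (-μ) + B * (y ^ (-μ) - x ^ (-μ)) := by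
        rw [mul_comm δ, mul_comm B]
        gcongr

lemma abs_integral_sub_rpow_neg_mul_sub_le (hμ0 : 0 ≤ μ) (hμ : μ < 1) {a t₁ t₂ δ B : ℝ}
    (ha : a ≤ t₂) (h21 : t₂ ≤ t₁) {g₁ g₂ : ℝ → ℝ} (hδ : ∀ s ∈ Icc a t₂, |g₁ s - g₂ s| ≤ δ)
    (hB : ∀ s ∈ Icc a t₂, |g₂ s| ≤ B) :
    |∫ s in a..t₂, ((t₁ - s) ^ (-μ) * g₁ s - (t₂ - s) ^ (-μ) * g₂ s)|
      ≤ (δ * (t₁ - a) ^ (1 - μ) + B * (t₁ - t₂) ^ (1 - μ)) / (1 - μ) := by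
  have hδ0 : 0 ≤ δ := (abs_nonneg _).trans (hδ a ⟨le_rfl, ha⟩)
  have hB0 : 0 ≤ B := (abs_nonneg _).trans (hB a ⟨le_rfl, ha⟩)
  have hI := intervalIntegrable_sub_rpow_neg hμ
  have hpow : (t₂ - a) ^ (1 - μ) ≤ (t₁ - a) ^ (1 - μ) :=
    Real.rpow_le_rpow (by linarith) (by linarith) (by linarith)
  have hQ : 0 ≤ (t₁ - t₂) ^ (1 - μ) := Real.rpow_nonneg (by linarith) _
  calc |∫ s in a..t₂, ((t₁ - s) ^ (-μ) * g₁ s - (t₂ - s) ^ (-μ) * g₂ s)|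
      ≤ ∫ s in a..t₂, (δ * (t₁ - s) ^ (-μ) + B * ((t₂ - s) ^ (-μ) - (t₁ - s) ^ (-μ))) := by
        refine (Real.norm_eq_abs _).symm.trans_le <| intervalIntegral.norm_integral_le_of_norm_le
          ha ?_ (((hI t₁ a t₂).const_mul δ).add (((hI t₂ a t₂).sub (hI t₁ a t₂)).const_mul B))
        filter_upwards [Measure.ae_ne volume t₂] with s hst₂ hs
        exact abs_rpow_neg_mul_sub_rpow_neg_mul_le hμ0 (sub_pos.2 (hs.2.lt_of_ne hst₂))
          (by linarith) (hδ s (Ioc_subset_Icc_self hs)) (hB s (Ioc_subset_Icc_self hs))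
    _ = (δ * ((t₁ - a) ^ (1 - μ) - (t₁ - t₂) ^ (1 - μ))
          + B * ((t₂ - a) ^ (1 - μ) - (t₁ - a) ^ (1 - μ) + (t₁ - t₂) ^ (1 - μ))) / (1 - μ) := by
        rw [intervalIntegral.integral_add ((hI t₁ a t₂).const_mul δ)
            (((hI t₂ a t₂).sub (hI t₁ a t₂)).const_mul B),
          intervalIntegral.integral_const_mul, intervalIntegral.integral_const_mul,
          intervalIntegral.integral_sub (hI t₂ a t₂) (hI t₁ a t₂), integral_sub_rpow_neg hμ,
          integral_sub_rpow_neg hμ, sub_self, Real.zero_rpow (by linarith)]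
        ring
    _ ≤ (δ * (t₁ - a) ^ (1 - μ) + B * (t₁ - t₂) ^ (1 - μ)) / (1 - μ) := by
        gcongr <;> linarith

lemma abs_sub_integral_sub_rpow_neg_mul_le (hμ0 : 0 ≤ μ) (hμ : μ < 1) {a t₁ t₂ δ B : ℝ}
    (ha : a ≤ t₂) (h21 : t₂ ≤ t₁) {g₁ g₂ : ℝ → ℝ} (hg₁ : ContinuousOn g₁ (Icc a t₁))
    (hg₂ : ContinuousOn g₂ (Icc a t₂)) (hg₁B : ∀ s ∈ Icc a t₁, |g₁ s| ≤ B)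
    (hg₂B : ∀ s ∈ Icc a t₂, |g₂ s| ≤ B) (hδ : ∀ s ∈ Icc a t₂, |g₁ s - g₂ s| ≤ δ) :
    |(∫ s in a..t₁, (t₁ - s) ^ (-μ) * g₁ s) - ∫ s in a..t₂, (t₂ - s) ^ (-μ) * g₂ s|
      ≤ (δ * (t₁ - a) ^ (1 - μ) + 2 * B * (t₁ - t₂) ^ (1 - μ)) / (1 - μ) := by
  have hI := intervalIntegrable_sub_rpow_neg hμ
  have hsub₁ : Icc a t₂ ⊆ Icc a t₁ := Icc_subset_Icc_right h21
  have hsub₂ : Icc t₂ t₁ ⊆ Icc a t₁ := Icc_subset_Icc_left ha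
  have hF₁ : IntervalIntegrable (fun s => (t₁ - s) ^ (-μ) * g₁ s) volume a t₂ :=
    (hI t₁ a t₂).mul_continuousOn (by rw [uIcc_of_le ha]; exact hg₁.mono hsub₁)
  have hF₁' : IntervalIntegrable (fun s => (t₁ - s) ^ (-μ) * g₁ s) volume t₂ t₁ :=
    (hI t₁ t₂ t₁).mul_continuousOn (by rw [uIcc_of_le h21]; exact hg₁.mono hsub₂)
  have hF₂ : IntervalIntegrable (fun s => (t₂ - s) ^ (-μ) * g₂ s) volume a t₂ :=
    (hI t₂ a t₂).mul_continuousOn (by rw [uIcc_of_le ha]; exact hg₂)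
  rw [← intervalIntegral.integral_add_adjacent_intervals hF₁ hF₁', add_sub_right_comm,
    ← intervalIntegral.integral_sub hF₁ hF₂]
  calc _ ≤ _ := abs_add_le _ _
    _ ≤ (δ * (t₁ - a) ^ (1 - μ) + B * (t₁ - t₂) ^ (1 - μ)) / (1 - μ)
          + B * (t₁ - t₂) ^ (1 - μ) / (1 - μ) :=
        add_le_add (abs_integral_sub_rpow_neg_mul_sub_le hμ0 hμ ha h21 hδ hg₂B)
          (abs_integral_sub_rpow_neg_mul_le hμ h21 fun s hs => hg₁B s (hsub₂ hs))
    _ = _ := by ring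

end SingularKernel

lemma abs_K1op_sub_le {μ κ Lip M V : ℝ} (hμ0 : 0 ≤ μ) (hμ : μ < 1) (hκ0 : 0 ≤ κ)
    (hκ : κ ≤ 1 - μ) (hLip : 0 ≤ Lip) {K : ℝ → ℝ → ℝ}
    (hK : ∀ t ∈ Icc (0:ℝ) 1, ContinuousOn (K t) (Icc 0 1))
    (hKM : ∀ t ∈ Icc (0:ℝ) 1, ∀ s ∈ Icc (0:ℝ) 1, |K t s| ≤ M)
    (hKH : ∀ θ₁ ∈ Icc (0:ℝ) 1, ∀ θ₂ ∈ Icc (0:ℝ) 1, ∀ s ∈ Icc (0:ℝ) 1,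
      |K θ₁ s - K θ₂ s| ≤ Lip * |θ₁ - θ₂| ^ κ)
    {v : ℝ → ℝ} (hv : ContinuousOn v (Icc 0 1)) (hV : ∀ s ∈ Icc (0:ℝ) 1, |v s| ≤ V)
    {t₁ t₂ : ℝ} (ht₁ : t₁ ∈ Icc (0:ℝ) 1) (ht₂ : t₂ ∈ Icc (0:ℝ) 1) :
    |K1op μ K v t₁ - K1op μ K v t₂| ≤ (Lip + 2 * M) * V / (1 - μ) * |t₁ - t₂| ^ κ := by
  wlog h21 : t₂ ≤ t₁ generalizing t₁ t₂
  · rw [abs_sub_comm, abs_sub_comm t₁]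
    exact this ht₂ ht₁ (le_of_not_ge h21)
  have hM : 0 ≤ M := (abs_nonneg _).trans (hKM 0 ⟨le_rfl, zero_le_one⟩ 0 ⟨le_rfl, zero_le_one⟩)
  have hV0 : 0 ≤ V := (abs_nonneg _).trans (hV 0 ⟨le_rfl, zero_le_one⟩)
  have hsub : ∀ {t}, t ≤ 1 → Icc 0 t ⊆ Icc (0:ℝ) 1 := fun ht => Icc_subset_Icc_right ht
  have hgB : ∀ t ∈ Icc (0:ℝ) 1, ∀ s ∈ Icc (0:ℝ) t, |K t s * v s| ≤ M * V := fun t ht s hs => by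
    rw [abs_mul]
    exact mul_le_mul (hKM t ht s (hsub ht.2 hs)) (hV s (hsub ht.2 hs)) (abs_nonneg _) hM
  have hδ : ∀ s ∈ Icc (0:ℝ) t₂, |K t₁ s * v s - K t₂ s * v s| ≤ Lip * |t₁ - t₂| ^ κ * V :=
    fun s hs => by
      rw [← sub_mul, abs_mul]
      exact mul_le_mul (hKH t₁ ht₁ t₂ ht₂ s (hsub ht₂.2 hs)) (hV s (hsub ht₂.2 hs))
        (abs_nonneg _) (by positivity)
  have hQP : (t₁ - t₂) ^ (1 - μ) ≤ |t₁ - t₂| ^ κ := by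
    rw [abs_of_nonneg (sub_nonneg.2 h21)]
    exact Real.rpow_le_rpow_of_exponent_ge' (by linarith) (by linarith [ht₁.2, ht₂.1]) hκ0 hκ
  have ht₁μ : t₁ ^ (1 - μ) ≤ 1 := Real.rpow_le_one ht₁.1 ht₁.2 (by linarith)
  have hP : 0 ≤ |t₁ - t₂| ^ κ := by positivity
  simp only [K1op, mul_assoc]
  calc _ ≤ (Lip * |t₁ - t₂| ^ κ * V * (t₁ - 0) ^ (1 - μ) + 2 * (M * V) * (t₁ - t₂) ^ (1 - μ))
        / (1 - μ) :=
        abs_sub_integral_sub_rpow_neg_mul_le hμ0 hμ ht₂.1 h21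
          (((hK t₁ ht₁).mono (hsub ht₁.2)).mul (hv.mono (hsub ht₁.2)))
          (((hK t₂ ht₂).mono (hsub ht₂.2)).mul (hv.mono (hsub ht₂.2)))
          (hgB t₁ ht₁) (hgB t₂ ht₂) hδ
    _ ≤ (Lip + 2 * M) * V / (1 - μ) * |t₁ - t₂| ^ κ := by
        rw [sub_zero, div_mul_eq_mul_div]
        gcongr ?_ / _
        nlinarith [mul_nonneg (mul_nonneg (mul_nonneg hLip hP) hV0) (sub_nonneg.2 ht₁μ),
          mul_nonneg (mul_nonneg hM hV0) (sub_nonneg.2 hQP)]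

lemma abs_rpow_sub_rpow_le {p a b : ℝ} (hp : 1 ≤ p) (ha : a ∈ Icc (0:ℝ) 1)
    (hb : b ∈ Icc (0:ℝ) 1) : |a ^ p - b ^ p| ≤ p * |a - b| := by
  wlog hba : b ≤ a generalizing a b
  · rw [abs_sub_comm, abs_sub_comm a]
    exact this hb ha (le_of_not_ge hba)
  have hd : ∀ x ∈ Icc b a, HasDerivWithinAt (fun x : ℝ => x ^ p) (p * x ^ (p - 1)) (Icc b a) x :=
    fun x _ => (Real.hasDerivAt_rpow_const (Or.inr hp)).hasDerivWithinAt
  have hbound : ∀ x ∈ Ico b a, ‖p * x ^ (p - 1)‖ ≤ p := fun x hx => by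
    have hx0 : 0 ≤ x := hb.1.trans hx.1
    rw [Real.norm_eq_abs, abs_mul, abs_of_nonneg (by linarith), abs_of_nonneg (by positivity)]
    exact mul_le_of_le_one_right (by linarith)
      (Real.rpow_le_one hx0 (hx.2.le.trans ha.2) (by linarith))
  rw [abs_of_nonneg (sub_nonneg.2 hba)]
  exact norm_image_sub_le_of_norm_deriv_le_segment' hd hbound a (right_mem_Icc.2 hba)

/-- Hölder-type bound for the composition of `𝒦₁` with `θ ↦ θ^{1/λ}`:
for `μ ∈ (0,1)`, `κ ∈ (0,1-μ)`, `λ ∈ (0,1]` and `K` continuous and `κ`-Hölder in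
its first variable, there is `C > 0` with
`|(𝒦₁v)(θ₁^{1/λ}) - (𝒦₁v)(θ₂^{1/λ})| ≤ C |θ₁-θ₂|^κ · max |v|`
for all continuous `v` and `θ₁ ≠ θ₂` in `[0,1]`. -/
theorem K1_holder_increment_bound_fractional (μ κ lam : ℝ) (hμ : μ ∈ Ioo (0:ℝ) 1)
    (hκ : κ ∈ Ioo (0:ℝ) (1 - μ)) (hlam : lam ∈ Ioc (0:ℝ) 1) (K : ℝ → ℝ → ℝ)
    (hKcont : ContinuousOn (fun p : ℝ × ℝ => K p.1 p.2) (Icc 0 1 ×ˢ Icc 0 1))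
    (Lip : ℝ) (hLip : 0 ≤ Lip)
    (hKH : ∀ θ₁ ∈ Icc (0:ℝ) 1, ∀ θ₂ ∈ Icc (0:ℝ) 1, ∀ s ∈ Icc (0:ℝ) 1,
      |K θ₁ s - K θ₂ s| ≤ Lip * |θ₁ - θ₂| ^ κ) :
    ∃ C > (0:ℝ), ∀ v : ℝ → ℝ, ContinuousOn v (Icc (0:ℝ) 1) →
      ∀ θ₁ ∈ Icc (0:ℝ) 1, ∀ θ₂ ∈ Icc (0:ℝ) 1, θ₁ ≠ θ₂ →
      |K1op μ K v (θ₁ ^ (1/lam)) - K1op μ K v (θ₂ ^ (1/lam))|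
        ≤ C * |θ₁ - θ₂| ^ κ * sSup ((fun θ => |v θ|) '' Icc (0:ℝ) 1) := by
  obtain ⟨hμ0, hμ1⟩ := hμ
  obtain ⟨hκ0, hκ1⟩ := hκ
  have h1μ : 0 < 1 - μ := by linarith
  have hp : 1 ≤ 1 / lam := by rw [le_div_iff₀ hlam.1]; linarith [hlam.2]
  obtain ⟨M, hM⟩ := (isCompact_Icc.prod isCompact_Icc).exists_bound_of_continuousOn hKcont
  have hKM : ∀ t ∈ Icc (0:ℝ) 1, ∀ s ∈ Icc (0:ℝ) 1, |K t s| ≤ max M 1 :=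
    fun t ht s hs => le_max_of_le_left (hM (t, s) ⟨ht, hs⟩)
  have hK : ∀ t ∈ Icc (0:ℝ) 1, ContinuousOn (K t) (Icc 0 1) := fun t ht =>
    hKcont.comp (Continuous.prodMk_right t).continuousOn fun s hs => ⟨ht, hs⟩
  have hpow : ∀ θ ∈ Icc (0:ℝ) 1, θ ^ (1 / lam) ∈ Icc (0:ℝ) 1 := fun θ hθ =>
    ⟨Real.rpow_nonneg hθ.1 _, Real.rpow_le_one hθ.1 hθ.2 (by linarith)⟩
  refine ⟨(Lip + 2 * max M 1) / (1 - μ) * (1 / lam) ^ κ, ?_, fun v hv θ₁ hθ₁ θ₂ hθ₂ _ => ?_⟩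
  · positivity
  set V := sSup ((fun θ => |v θ|) '' Icc (0:ℝ) 1)
  have hV : ∀ s ∈ Icc (0:ℝ) 1, |v s| ≤ V := fun s hs =>
    le_csSup (isCompact_Icc.bddAbove_image hv.abs) (mem_image_of_mem _ hs)
  have hV0 : 0 ≤ V := (abs_nonneg _).trans (hV 0 ⟨le_rfl, zero_le_one⟩)
  calc |K1op μ K v (θ₁ ^ (1 / lam)) - K1op μ K v (θ₂ ^ (1 / lam))|
      ≤ (Lip + 2 * max M 1) * V / (1 - μ) * |θ₁ ^ (1 / lam) - θ₂ ^ (1 / lam)| ^ κ :=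
        abs_K1op_sub_le hμ0.le hμ1 hκ0.le hκ1.le hLip hK hKM hKH hv hV (hpow θ₁ hθ₁)
          (hpow θ₂ hθ₂)
    _ ≤ (Lip + 2 * max M 1) * V / (1 - μ) * (1 / lam * |θ₁ - θ₂|) ^ κ := by
        gcongr
        exact abs_rpow_sub_rpow_le hp hθ₁ hθ₂
    _ = (Lip + 2 * max M 1) / (1 - μ) * (1 / lam) ^ κ * |θ₁ - θ₂| ^ κ * V := by
        rw [Real.mul_rpow (by linarith) (abs_nonneg _)]
        ring
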